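/- Let {ω_N} be a sequence of N-point best-packing configurations on S² (Euclidean metric). Then liminf_{N→∞} γ(ω_N, S²) ≥ 1/√3, where γ is the mesh-separation ratio. (This follows from the planar packing constant Δ₂ = π/√12 and covering constant Θ₂ = 2π/√27, via the asymptotic bound γ(ω_N, Sⁿ) ≥ (1/2)(Θ_n/Δ_n)^{1/n} + o(1).) -/

import Mathlib

/-!
At a deepest hole `y` of a configuration on the sphere, at distance `η` from it, at least three
points of the configuration are nearest to `y`: with at most two of them, some direction tangent at
`y` moves away from all of them. Three points in a ball of radius `η` have two within `√3 η` of each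
other, so `δ ≤ √3 η` for every configuration with at least two points.

The liminf only equals this bound if the ratio does not tend to infinity (otherwise `liminf` takes
its junk value `0`). Since `δ_N → 0`, strict drops `δ_{N+1} < δ_N` occur infinitely often, and at
such `N` a best packing has `η ≤ δ`: adding the centre of a larger hole would give `N + 1` points
with separation `δ_N`.
-/

open scoped BigOperators
open Filter Metric

/-- Separation distance of an `N`-point configuration. -/
noncomputable def sep {E : Type*} [MetricSpace E] {N : ℕ} (x : Fin N → E) : ℝ :=
  ⨅ p : {p : Fin N × Fin N // p.1 ≠ p.2}, dist (x p.1.1) (x p.1.2)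

/-- Mesh norm (covering radius) of a configuration relative to a set `S`. -/
noncomputable def mesh {E : Type*} [MetricSpace E] {N : ℕ} (S : Set E) (x : Fin N → E) : ℝ :=
  ⨆ y : S, ⨅ i, dist (y : E) (x i)

/-- `N`-point best-packing distance of the set `S`. -/
noncomputable def packDist {E : Type*} [MetricSpace E] (S : Set E) (N : ℕ) : ℝ :=
  ⨆ x : {x : Fin N → E // Function.Injective x ∧ ∀ i, x i ∈ S}, sep x.1

/-- Riesz `s`-energy of a configuration. -/
noncomputable def energy {E : Type*} [MetricSpace E] {N : ℕ} (s : ℝ) (x : Fin N → E) : ℝ :=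
  ∑ i, ∑ j ∈ Finset.univ.filter (· ≠ i), dist (x i) (x j) ^ (-s)

/-- Minimal `N`-point Riesz `s`-energy of the set `S`. -/
noncomputable def minEnergy {E : Type*} [MetricSpace E] (S : Set E) (N : ℕ) (s : ℝ) : ℝ :=
  ⨅ x : {x : Fin N → E // Function.Injective x ∧ ∀ i, x i ∈ S}, energy s x.1

open Function Topology Module
open scoped RealInnerProductSpace

section MetricSpace

variable {E : Type*} [MetricSpace E]

theorem Fin.nonempty_ne_pair {N : ℕ} (hN : 2 ≤ N) : Nonempty {p : Fin N × Fin N // p.1 ≠ p.2} :=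
  ⟨⟨(⟨0, by omega⟩, ⟨1, by omega⟩), by simp [Fin.ext_iff]⟩⟩

theorem sep_le_dist {N : ℕ} (x : Fin N → E) {i j : Fin N} (h : i ≠ j) :
    sep x ≤ dist (x i) (x j) :=
  ciInf_le (f := fun p : {p : Fin N × Fin N // p.1 ≠ p.2} => dist (x p.1.1) (x p.1.2))
    ⟨0, by rintro _ ⟨p, rfl⟩; exact dist_nonneg⟩ ⟨(i, j), h⟩

theorem sep_nonneg {N : ℕ} (x : Fin N → E) : 0 ≤ sep x :=
  Real.iInf_nonneg fun _ => dist_nonneg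

theorem le_sep {N : ℕ} (hN : 2 ≤ N) {x : Fin N → E} {a : ℝ}
    (h : ∀ i j, i ≠ j → a ≤ dist (x i) (x j)) : a ≤ sep x :=
  have := Fin.nonempty_ne_pair hN
  le_ciInf fun p => h _ _ p.2

theorem sep_pos {N : ℕ} (hN : 2 ≤ N) {x : Fin N → E} (hinj : Injective x) : 0 < sep x := by
  have := Fin.nonempty_ne_pair hN
  obtain ⟨p, hp⟩ := exists_eq_ciInf_of_finite
    (f := fun p : {p : Fin N × Fin N // p.1 ≠ p.2} => dist (x p.1.1) (x p.1.2))
  rw [sep, ← hp]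
  exact dist_pos.2 (hinj.ne p.2)

theorem sep_le_diam {S : Set E} (hS : Bornology.IsBounded S) {N : ℕ} {x : Fin N → E}
    (hx : ∀ i, x i ∈ S) : sep x ≤ diam S := by
  rcases isEmpty_or_nonempty {p : Fin N × Fin N // p.1 ≠ p.2} with h | ⟨⟨_, hp⟩⟩
  · rw [sep, Real.iInf_of_isEmpty]
    exact diam_nonneg
  · exact (sep_le_dist x hp).trans (dist_le_diam_of_mem hS (hx _) (hx _))

theorem packDist_nonneg (S : Set E) (N : ℕ) : 0 ≤ packDist S N :=
  Real.iSup_nonneg fun _ => sep_nonneg _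

theorem sep_le_packDist {S : Set E} (hS : Bornology.IsBounded S) {N : ℕ} {x : Fin N → E}
    (hinj : Injective x) (hx : ∀ i, x i ∈ S) : sep x ≤ packDist S N :=
  le_ciSup (f := fun c : {c : Fin N → E // Injective c ∧ ∀ i, c i ∈ S} => sep c.1)
    ⟨diam S, by rintro _ ⟨c, rfl⟩; exact sep_le_diam hS c.2.2⟩ ⟨x, hinj, hx⟩

theorem tendsto_packDist_atTop {S : Set E} (hS : TotallyBounded S) :
    Tendsto (packDist S) atTop (𝓝 0) := by
  refine tendsto_order.2 ⟨fun a ha => .of_forall fun N => ha.trans_le (packDist_nonneg S N),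
    fun ε hε => ?_⟩
  obtain ⟨t, htfin, hcov⟩ := totallyBounded_iff.1 hS (ε / 4) (by positivity)
  have := htfin.fintype
  filter_upwards [eventually_gt_atTop (Fintype.card t)] with N hN
  refine lt_of_le_of_lt (Real.iSup_le (fun c => ?_) (by positivity)) (half_lt_self hε)
  have hcenter : ∀ i, ∃ p : t, c.1 i ∈ ball (p : E) (ε / 4) := fun i => by
    simpa using hcov (c.2.2 i)
  choose f hf using hcenter
  obtain ⟨i, j, hij, hfij⟩ := Fintype.exists_ne_map_eq_of_card_lt f (by simpa using hN)
  calc sep c.1 ≤ dist (c.1 i) (c.1 j) := sep_le_dist _ hij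
    _ ≤ dist (c.1 i) (f i) + dist (c.1 j) (f j) := by
        rw [hfij]; exact dist_triangle_right _ _ _
    _ ≤ ε / 4 + ε / 4 := add_le_add (hf i).le (hf j).le
    _ = ε / 2 := by ring

theorem mesh_le_sep_of_packDist_succ_lt {S : Set E} (hS : Bornology.IsBounded S) {N : ℕ}
    (hN : 0 < N) {x : Fin N → E} (hinj : Injective x) (hx : ∀ i, x i ∈ S)
    (hbest : sep x = packDist S N) (hlt : packDist S (N + 1) < packDist S N) :
    mesh S x ≤ sep x := by
  by_contra! hhole
  have : Nonempty S := ⟨⟨x ⟨0, hN⟩, hx _⟩⟩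
  obtain ⟨⟨y, hyS⟩, hy⟩ := exists_lt_of_lt_ciSup hhole
  have hfar : ∀ i, sep x < dist y (x i) := fun i =>
    hy.trans_le (ciInf_le (Set.finite_range _).bddBelow i)
  have hnew : y ∉ Set.range x := by
    rintro ⟨i, rfl⟩
    simpa using (sep_nonneg x).trans_lt (hfar i)
  have hsep : sep x ≤ sep (Fin.cons y x : Fin (N + 1) → E) := by
    refine le_sep (by omega) fun i j hij => ?_
    cases i using Fin.cases <;> cases j using Fin.cases
    · exact absurd rfl hij
    · exact (hfar _).le
    · exact (dist_comm y _ ▸ hfar _).le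
    · exact sep_le_dist x fun h => hij (congrArg Fin.succ h)
  have := sep_le_packDist hS (Fin.cons_injective_iff.2 ⟨hnew, hinj⟩)
    (Fin.forall_fin_succ.2 ⟨hyS, hx⟩)
  linarith

end MetricSpace

theorem frequently_lt_of_tendsto {α : Type*} [LinearOrder α] [TopologicalSpace α]
    [ClosedIciTopology α] {u : ℕ → α} {a : α} (hu : Tendsto u atTop (𝓝 a))
    (ha : ∀ᶠ n in atTop, a < u n) : ∃ᶠ n in atTop, u (n + 1) < u n := by
  intro hmono
  obtain ⟨M, hM⟩ := eventually_atTop.1 (ha.and (hmono.mono fun n => not_lt.1))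
  have hge : ∀ n, M ≤ n → u M ≤ u n := fun n hn => by
    induction n, hn using Nat.le_induction with
    | base => exact le_rfl
    | succ n hn ih => exact ih.trans (hM n hn).2
  exact (hM M le_rfl).1.not_ge (ge_of_tendsto hu (eventually_atTop.2 ⟨M, hge⟩))

theorem exists_isMaxOn_mesh {E : Type*} [MetricSpace E] {S : Set E} (hS : IsCompact S)
    (hne : S.Nonempty) {N : ℕ} (x : Fin N → E) :
    ∃ y ∈ S, mesh S x = ⨅ i, dist y (x i) ∧ IsMaxOn (fun z => ⨅ i, dist z (x i)) S y := by
  have husc : UpperSemicontinuous fun z => ⨅ i, dist z (x i) :=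
    upperSemicontinuous_ciInf (fun _ => ⟨0, by rintro _ ⟨i, rfl⟩; exact dist_nonneg⟩)
      fun i => (continuous_id.dist continuous_const).upperSemicontinuous
  obtain ⟨y, hyS, hmax⟩ := (husc.upperSemicontinuousOn S).exists_isMaxOn hne hS
  exact ⟨y, hyS, hmax.iSup_eq hyS, hmax⟩

theorem exists_three_or_forall_eq_or_eq {α : Type*} {p : α → Prop} {a : α} (ha : p a) :
    (∃ i j k, p i ∧ p j ∧ p k ∧ i ≠ j ∧ i ≠ k ∧ j ≠ k) ∨ ∃ b, ∀ i, p i → i = a ∨ i = b := by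
  by_cases h : ∃ b, p b ∧ b ≠ a
  · obtain ⟨b, hb, hba⟩ := h
    by_cases h' : ∃ k, p k ∧ k ≠ a ∧ k ≠ b
    · obtain ⟨k, hk, hka, hkb⟩ := h'
      exact .inl ⟨a, b, k, ha, hb, hk, hba.symm, hka.symm, hkb.symm⟩
    · push Not at h'
      exact .inr ⟨b, fun i hi => or_iff_not_imp_left.2 (h' i hi)⟩
  · push Not at h
    exact .inr ⟨a, fun i hi => .inl (h i hi)⟩

section InnerProductSpace

variable {E : Type*} [NormedAddCommGroup E] [InnerProductSpace ℝ E]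

theorem dist_sq_eq_two_sub_two_inner {u v : E} (hu : ‖u‖ = 1) (hv : ‖v‖ = 1) :
    dist u v ^ 2 = 2 - 2 * ⟪u, v⟫ := by
  rw [dist_eq_norm, norm_sub_sq_real, hu, hv]
  ring

/-- By `∑ ‖uᵢ - uⱼ‖² + ‖u₁ + u₂ + u₃‖² = 3 ∑ ‖uᵢ‖²` (with `uᵢ` the points minus `p`), the three
squared distances sum to at most `9 r²`. -/
theorem exists_dist_le_sqrt_three_mul {p a b c : E} {r : ℝ} (ha : dist a p ≤ r)
    (hb : dist b p ≤ r) (hc : dist c p ≤ r) :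
    dist a b ≤ √3 * r ∨ dist a c ≤ √3 * r ∨ dist b c ≤ √3 * r := by
  by_contra! hfar
  obtain ⟨hab, hac, hbc⟩ := hfar
  have hr : 0 ≤ r := dist_nonneg.trans ha
  have hsq : ∀ {d : ℝ}, √3 * r < d → 3 * r ^ 2 < d ^ 2 := fun h => by
    have := pow_lt_pow_left₀ h (by positivity) two_ne_zero
    rwa [mul_pow, Real.sq_sqrt (by norm_num)] at this
  have hid : ∀ u v w : E, ‖u - v‖ ^ 2 + ‖u - w‖ ^ 2 + ‖v - w‖ ^ 2 + ‖u + v + w‖ ^ 2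
      = 3 * (‖u‖ ^ 2 + ‖v‖ ^ 2 + ‖w‖ ^ 2) := fun u v w => by
    rw [norm_sub_sq_real, norm_sub_sq_real, norm_sub_sq_real, norm_add_sq_real,
      norm_add_sq_real, inner_add_left]
    ring
  have hsub : ∀ q s : E, dist q s = ‖(q - p) - (s - p)‖ := fun q s => by
    rw [dist_eq_norm, sub_sub_sub_cancel_right]
  have := hid (a - p) (b - p) (c - p)
  rw [← hsub, ← hsub, ← hsub, ← dist_eq_norm, ← dist_eq_norm, ← dist_eq_norm] at this
  have := hsq hab; have := hsq hac; have := hsq hbc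
  nlinarith [sq_nonneg ‖a - p + (b - p) + (c - p)‖, mul_self_le_mul_self dist_nonneg ha,
    mul_self_le_mul_self dist_nonneg hb, mul_self_le_mul_self dist_nonneg hc]

theorem exists_norm_eq_one_inner_eq_zero [FiniteDimensional ℝ E] (hE : 3 ≤ finrank ℝ E)
    (u v : E) : ∃ d : E, ‖d‖ = 1 ∧ ⟪u, d⟫ = 0 ∧ ⟪v, d⟫ = 0 := by
  have hker := LinearMap.ker_ne_bot_of_finrank_lt
    (f := (innerₛₗ ℝ u).prod (innerₛₗ ℝ v)) (by simp; omega)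
  obtain ⟨e, he, he0⟩ := Submodule.exists_mem_ne_zero_of_ne_bot hker
  have hu : ⟪u, e⟫ = 0 := congrArg Prod.fst he
  have hv : ⟪v, e⟫ = 0 := congrArg Prod.snd he
  refine ⟨‖e‖⁻¹ • e, ?_, ?_, ?_⟩
  · rw [norm_smul, norm_inv, norm_norm, inv_mul_cancel₀ (norm_ne_zero_iff.2 he0)]
  · rw [real_inner_smul_right, hu, mul_zero]
  · rw [real_inner_smul_right, hv, mul_zero]

theorem exists_forall_lt_dist_of_inner_nonpos {ι : Type*} [Finite ι] {x : ι → E}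
    (hx : ∀ i, ‖x i‖ = 1) {y d : E} (hy : ‖y‖ = 1) (hd : ‖d‖ = 1) (hyd : ⟪y, d⟫ = 0)
    {η : ℝ} (hη : η ^ 2 < 2) (hle : ∀ i, η ≤ dist y (x i))
    (hnear : ∀ i, dist y (x i) = η → ⟪d, x i⟫ ≤ 0) :
    ∃ z : E, ‖z‖ = 1 ∧ ∀ i, η < dist z (x i) := by
  set z : ℝ → E := fun t => Real.cos t • y + Real.sin t • d
  have hz : ∀ t, ‖z t‖ = 1 := fun t => by
    have : ‖z t‖ ^ 2 = 1 := by
      rw [norm_add_sq_real, real_inner_smul_left, real_inner_smul_right, hyd, norm_smul,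
        norm_smul, hy, hd, Real.norm_eq_abs, Real.norm_eq_abs, mul_one, mul_one, sq_abs,
        sq_abs, mul_zero, mul_zero, mul_zero, add_zero, Real.cos_sq_add_sin_sq]
    exact (pow_eq_one_iff_of_nonneg (norm_nonneg _) two_ne_zero).1 this
  have hev : ∀ i, ∀ᶠ t in 𝓝[>] 0, η < dist (z t) (x i) := by
    intro i
    rcases (hle i).lt_or_eq with hfar | hnear_i
    · have hcont : Continuous fun t => dist (z t) (x i) := by fun_prop
      refine nhdsWithin_le_nhds ((hcont.tendsto 0).eventually (lt_mem_nhds ?_))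
      simpa [z] using hfar
    · filter_upwards [Ioo_mem_nhdsGT Real.pi_pos] with t ⟨ht0, htπ⟩
      have hcos : Real.cos t < 1 := by
        simpa using Real.cos_lt_cos_of_nonneg_of_le_pi le_rfl htπ.le ht0
      have hsin : 0 < Real.sin t := Real.sin_pos_of_pos_of_lt_pi ht0 htπ
      have hyx := dist_sq_eq_two_sub_two_inner hy (hx i)
      have hzx := dist_sq_eq_two_sub_two_inner (hz t) (hx i)
      have hinner : ⟪z t, x i⟫ = Real.cos t * ⟪y, x i⟫ + Real.sin t * ⟪d, x i⟫ := by
        simp only [z, inner_add_left, real_inner_smul_left]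
      refine lt_of_pow_lt_pow_left₀ 2 dist_nonneg ?_
      rw [← hnear_i] at hyx
      have hdx := mul_nonpos_of_nonneg_of_nonpos hsin.le (hnear i hnear_i.symm)
      nlinarith
  obtain ⟨t, ht⟩ := (eventually_all.2 hev).exists
  exact ⟨z t, hz t, ht⟩

theorem exists_forall_lt_dist_of_forall_eq_or_eq [FiniteDimensional ℝ E] (hE : 3 ≤ finrank ℝ E)
    {ι : Type*} [Finite ι] {x : ι → E} (hx : ∀ i, ‖x i‖ = 1) {y : E} (hy : ‖y‖ = 1) {η : ℝ}
    (hη : η ^ 2 < 2) (hle : ∀ i, η ≤ dist y (x i)) {a b : ι}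
    (hab : ∀ i, dist y (x i) = η → i = a ∨ i = b) :
    ∃ z : E, ‖z‖ = 1 ∧ ∀ i, η < dist z (x i) := by
  obtain ⟨d, hd, hyd, habd⟩ := exists_norm_eq_one_inner_eq_zero hE y (x a - x b)
  have hba : ⟪d, x b⟫ = ⟪d, x a⟫ := by
    rw [inner_sub_left, real_inner_comm d, real_inner_comm d, sub_eq_zero] at habd
    exact habd.symm
  obtain ⟨d, hd, hyd, hda, hdb⟩ : ∃ d : E, ‖d‖ = 1 ∧ ⟪y, d⟫ = 0 ∧ ⟪d, x a⟫ ≤ 0 ∧ ⟪d, x b⟫ ≤ 0 := by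
    rcases le_total ⟪d, x a⟫ 0 with h | h
    · exact ⟨d, hd, hyd, h, hba ▸ h⟩
    · refine ⟨-d, by rw [norm_neg, hd], by rw [inner_neg_right, hyd, neg_zero], ?_, ?_⟩ <;>
        rw [inner_neg_left, neg_nonpos]
      exacts [h, hba ▸ h]
  exact exists_forall_lt_dist_of_inner_nonpos hx hy hd hyd hη hle
    fun i hi => (hab i hi).elim (· ▸ hda) (· ▸ hdb)

end InnerProductSpace

theorem sep_le_sqrt_three_mul_mesh_sphere {E : Type*} [NormedAddCommGroup E]
    [InnerProductSpace ℝ E] [FiniteDimensional ℝ E] (hE : 3 ≤ finrank ℝ E) {N : ℕ} (hN : 2 ≤ N)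
    {x : Fin N → E} (hx : ∀ i, x i ∈ sphere (0 : E) 1) :
    sep x ≤ √3 * mesh (sphere (0 : E) 1) x := by
  have : Nontrivial E := nontrivial_of_finrank_pos (R := ℝ) (by omega)
  have : Nonempty (Fin N) := ⟨⟨0, by omega⟩⟩
  have hx1 : ∀ i, ‖x i‖ = 1 := fun i => mem_sphere_zero_iff_norm.1 (hx i)
  obtain ⟨y, hyS, hmesh, hmax⟩ := exists_isMaxOn_mesh (isCompact_sphere (0 : E) 1)
    (NormedSpace.sphere_nonempty.2 zero_le_one) x
  have hy : ‖y‖ = 1 := mem_sphere_zero_iff_norm.1 hyS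
  rw [hmesh]
  set η := ⨅ i, dist y (x i)
  have hle : ∀ i, η ≤ dist y (x i) := ciInf_le (Set.finite_range _).bddBelow
  obtain ⟨a, ha⟩ : ∃ a, dist y (x a) = η := exists_eq_ciInf_of_finite
  have hη0 : 0 ≤ η := ha ▸ dist_nonneg
  rcases le_or_gt 2 (η ^ 2) with hη | hη
  · obtain ⟨⟨_, h01⟩⟩ := Fin.nonempty_ne_pair hN
    calc sep x ≤ dist (x _) (x _) := sep_le_dist x h01
      _ ≤ ‖x _‖ + ‖x _‖ := dist_le_norm_add_norm _ _
      _ = 2 := by rw [hx1, hx1]; norm_num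
      _ ≤ √3 * η := by
        rw [← Real.sqrt_sq hη0, ← Real.sqrt_mul (by norm_num)]
        exact Real.le_sqrt_of_sq_le (by linarith)
  rcases exists_three_or_forall_eq_or_eq (p := fun i => dist y (x i) = η) ha with
    ⟨i, j, k, hi, hj, hk, hij, hik, hjk⟩ | ⟨b, hab⟩
  · have hball : ∀ l, dist y (x l) = η → dist (x l) y ≤ η := fun l hl => (dist_comm y _ ▸ hl).le
    rcases exists_dist_le_sqrt_three_mul (hball i hi) (hball j hj) (hball k hk) with h | h | h
    exacts [(sep_le_dist x hij).trans h, (sep_le_dist x hik).trans h, (sep_le_dist x hjk).trans h]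
  obtain ⟨z, hz, hfar⟩ := exists_forall_lt_dist_of_forall_eq_or_eq hE hx1 hy hη hle hab
  obtain ⟨k, hk⟩ := exists_eq_ciInf_of_finite (f := fun i => dist z (x i))
  exact absurd (hk ▸ hfar k) (hmax (mem_sphere_zero_iff_norm.2 hz)).not_gt

theorem stmt_18 (x : (N : ℕ) → Fin N → EuclideanSpace ℝ (Fin 3))
    (hinj : ∀ N, Function.Injective (x N))
    (hS : ∀ N i, x N i ∈ Metric.sphere (0 : EuclideanSpace ℝ (Fin 3)) 1)
    (hbest : ∀ N, sep (x N) = packDist (Metric.sphere (0 : EuclideanSpace ℝ (Fin 3)) 1) N) :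
    1 / Real.sqrt 3 ≤
      Filter.liminf
        (fun N => mesh (Metric.sphere (0 : EuclideanSpace ℝ (Fin 3)) 1) (x N) / sep (x N))
        Filter.atTop := by
  set S := sphere (0 : EuclideanSpace ℝ (Fin 3)) 1
  have hsep : ∀ N, 2 ≤ N → 0 < sep (x N) := fun N hN => sep_pos hN (hinj N)
  have hlower : ∀ᶠ N in atTop, 1 / √3 ≤ mesh S (x N) / sep (x N) := by
    filter_upwards [eventually_ge_atTop 2] with N hN
    rw [div_le_div_iff₀ (by positivity) (hsep N hN), one_mul, mul_comm]
    exact sep_le_sqrt_three_mul_mesh_sphere (by simp) hN (hS N)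
  have hdrop : ∃ᶠ N in atTop, packDist S (N + 1) < packDist S N :=
    frequently_lt_of_tendsto (tendsto_packDist_atTop (isCompact_sphere _ _).totallyBounded)
      ((eventually_ge_atTop 2).mono fun N hN => hbest N ▸ hsep N hN)
  have hupper : ∃ᶠ N in atTop, mesh S (x N) / sep (x N) ≤ 1 :=
    (hdrop.and_eventually (eventually_ge_atTop 2)).mono fun N ⟨hlt, hN⟩ =>
      (div_le_one (hsep N hN)).2 <| mesh_le_sep_of_packDist_succ_lt isBounded_sphere
        (by omega) (hinj N) (hS N) (hbest N) hlt
  exact le_liminf_of_le (IsCoboundedUnder.of_frequently_le hupper) hlower
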